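/- arXiv:2406.05825 — 3 statements merged into one kernel-verified Lean document; each statement's English description precedes it below -/
import Mathlib

section
/- Let G be a finite connected simple graph on at least 2 vertices, let f be an independent broadcast on G, and let H be an isometric subgraph of G. If at least two vertices of H are broadcasting under f, then the restriction of f to H is an independent broadcast on H (in particular, f(x) ≤ ecc_H(x) for every vertex x of H). -/
/-!
Hearing is defined through distances, which an isometric embedding preserves, so independence
passes to the subgraph. For the eccentricity bound at a broadcasting vertex `x`, a second
broadcasting vertex `y` of the subgraph does not hear `x`, so `f x < d(x, y) ≤ ecc_H x`.
-/

variable {V : Type*}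

/-- The eccentricity of a vertex: the maximum distance to any vertex. -/
noncomputable def ecc (G : SimpleGraph V) [Fintype V] (v : V) : ℕ :=
  Finset.univ.sup (fun u => G.dist u v)

/-- A broadcast on `G`: a function assigning each vertex a power at most its eccentricity. -/
def IsBroadcast (G : SimpleGraph V) [Fintype V] (f : V → ℕ) : Prop :=
  ∀ v, f v ≤ ecc G v

/-- `u` hears the broadcasting vertex `v`. -/
def Hears (G : SimpleGraph V) (f : V → ℕ) (u v : V) : Prop :=
  0 < f v ∧ G.dist u v ≤ f v

/-- An independent broadcast: no broadcasting vertex hears another vertex. -/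
def IsIndepBroadcast (G : SimpleGraph V) [Fintype V] (f : V → ℕ) : Prop :=
  IsBroadcast G f ∧ ∀ v w, 0 < f v → v ≠ w → ¬ Hears G f v w

theorem dist_le_ecc [Fintype V] (G : SimpleGraph V) (u v : V) : G.dist u v ≤ ecc G v :=
  Finset.le_sup (f := fun u => G.dist u v) (Finset.mem_univ u)

theorem IsIndepBroadcast.lt_dist [Fintype V] {G : SimpleGraph V} {f : V → ℕ}
    (hf : IsIndepBroadcast G f) {v w : V} (hv : 0 < f v) (hw : 0 < f w) (hvw : v ≠ w) :
    f w < G.dist v w :=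
  lt_of_not_ge fun hle => hf.2 v w hv hvw ⟨hw, hle⟩

section Isometry

variable {W : Type*} [Fintype V] [Fintype W] {G : SimpleGraph V} {H : SimpleGraph W} {f : V → ℕ}
  {φ : W → V}

theorem IsIndepBroadcast.isBroadcast_comp_of_isometry (hf : IsIndepBroadcast G f)
    (hφ : Function.Injective φ) (hiso : ∀ x y, H.dist x y = G.dist (φ x) (φ y))
    (h2 : ∃ x y, x ≠ y ∧ 0 < f (φ x) ∧ 0 < f (φ y)) : IsBroadcast H (f ∘ φ) := by
  intro x
  rcases Nat.eq_zero_or_pos (f (φ x)) with hx | hx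
  · simp [hx]
  obtain ⟨y, hy, hyx⟩ : ∃ y, 0 < f (φ y) ∧ y ≠ x := by
    obtain ⟨a, b, hab, ha, hb⟩ := h2
    by_cases hxa : x = a
    · exact ⟨b, hb, fun h => hab (hxa ▸ h.symm)⟩
    · exact ⟨a, ha, fun h => hxa h.symm⟩
  calc f (φ x) ≤ G.dist (φ y) (φ x) := (hf.lt_dist hy hx (hφ.ne hyx)).le
    _ = H.dist y x := (hiso y x).symm
    _ ≤ ecc H x := dist_le_ecc H y x

theorem IsIndepBroadcast.comp_of_isometry (hf : IsIndepBroadcast G f)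
    (hφ : Function.Injective φ) (hiso : ∀ x y, H.dist x y = G.dist (φ x) (φ y))
    (h2 : ∃ x y, x ≠ y ∧ 0 < f (φ x) ∧ 0 < f (φ y)) : IsIndepBroadcast H (f ∘ φ) := by
  refine ⟨hf.isBroadcast_comp_of_isometry hφ hiso h2, fun v w hv hvw ⟨hw, hd⟩ => ?_⟩
  rw [hiso] at hd
  exact hf.2 (φ v) (φ w) hv (hφ.ne hvw) ⟨hw, hd⟩

end Isometry

theorem stmt0_general [Fintype V] (G : SimpleGraph V) (f : V → ℕ) (hf : IsIndepBroadcast G f)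
    (s : Set V) [Fintype s]
    (hiso : ∀ x y : s, (G.induce s).dist x y = G.dist x y)
    (h2 : ∃ x y : s, x ≠ y ∧ 0 < f x ∧ 0 < f y) :
    IsIndepBroadcast (G.induce s) (fun x => f x) :=
  hf.comp_of_isometry Subtype.val_injective hiso h2

/-- if `f` is an independent broadcast on a finite connected graph `G` on at
least two vertices and `H = G.induce s` is an isometric subgraph with at least two
broadcasting vertices, then the restriction of `f` to `H` is an independent broadcast on `H`. -/
theorem stmt0 [Fintype V] (G : SimpleGraph V) (hG : G.Connected)
    (hV : 1 < Fintype.card V) (f : V → ℕ) (hf : IsIndepBroadcast G f)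
    (s : Set V) [Fintype s]
    (hiso : ∀ x y : s, (G.induce s).dist x y = G.dist x y)
    (h2 : ∃ x y : s, x ≠ y ∧ 0 < f x ∧ 0 < f y) :
    IsIndepBroadcast (G.induce s) (fun x => f x) :=
  stmt0_general G f hf s hiso h2
end

section
/- Let T_h be a perfect binary tree of height h = 3m + t ≥ 4 with 0 ≤ t ≤ 2. Let S ⊆ V(T_h) consist of: (1) all vertices at level h−1; (2) all vertices at levels h−2, h−5, …, 1+t (the levels congruent to h−2 modulo 3 that are at least 1+t); and (3) the root when t = 0 or t = 1, or both vertices at level 1 when t = 2. Then S is a multicover of T_h. -/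
/-!
A vertex at level `ℓ` is joined to its ancestor at level `s` by a path of length `ℓ - s`, so
the ball `N_r[v]` contains `2 ^ (l - s)` vertices of any level `l` with
`(l - s) + (ℓ - s) ≤ r`. As the set is a union of full levels, it suffices to find, for each
`v` and `r`, a few of its levels whose contributions add up to `r`. Near the leaves
(`h ≤ r + ℓ + 1`) levels `h - 1` and `h - 2` suffice. Otherwise one of `ℓ + r - 2`,
`ℓ + r - 1`, `ℓ + r` belongs to the progression `h - 2, h - 5, …, 1 + t` and alone contributes
at least `2 ^ (r - 1)`, or `2 ^ (r - 2)` with `r ≥ 4`; the few balls around the root left over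
are covered by the root or by the two vertices at level `1`.
-/

variable {V : Type*}

/-- The broadcast independence number: the maximum weight of an independent broadcast. -/
noncomputable def alphaB (G : SimpleGraph V) [Fintype V] : ℕ :=
  sSup {w | ∃ f, IsIndepBroadcast G f ∧ w = ∑ v, f v}

/-- A packing broadcast: every vertex hears at most one broadcasting vertex. -/
def IsPackingBroadcast (G : SimpleGraph V) [Fintype V] (f : V → ℕ) : Prop :=
  IsBroadcast G f ∧ ∀ u : V, {v | Hears G f u v}.Subsingleton

/-- The broadcast packing number: the maximum weight of a packing broadcast. -/
noncomputable def Pb (G : SimpleGraph V) [Fintype V] : ℕ :=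
  sSup {w | ∃ f, IsPackingBroadcast G f ∧ w = ∑ v, f v}

/-- A multicover: a set of vertices such that every ball of radius `r` (with
`1 ≤ r ≤ ecc v`) contains at least `r` of its elements. -/
def IsMulticover (G : SimpleGraph V) [Fintype V] (S : Finset V) : Prop :=
  ∀ v : V, ∀ r : ℕ, 1 ≤ r → r ≤ ecc G v → r ≤ (S.filter (fun u => G.dist u v ≤ r)).card

/-- The multicover number: the minimum cardinality of a multicover. -/
noncomputable def Mc (G : SimpleGraph V) [Fintype V] : ℕ :=
  sInf {n | ∃ S : Finset V, IsMulticover G S ∧ n = S.card}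

/-- Vertices of the perfect `k`-ary tree of height `h`: strings of length at most `h`
over a `k`-letter alphabet. -/
abbrev KVert (k h : ℕ) : Type := {l : List (Fin k) // l.length ≤ h}

noncomputable instance (k h : ℕ) : Fintype (KVert k h) :=
  (List.finite_length_le (Fin k) h).fintype

/-- The perfect `k`-ary tree of height `h`: each string of length less than `h` is
adjacent to its `k` one-letter extensions. -/
def karyTree (k h : ℕ) : SimpleGraph (KVert k h) where
  Adj x y := (∃ a : Fin k, x.1 = a :: y.1) ∨ (∃ a : Fin k, y.1 = a :: x.1)
  symm := ⟨fun x y hxy => hxy.symm⟩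
  loopless := by
    constructor
    rintro x (⟨a, ha⟩ | ⟨a, ha⟩) <;>
    · have := congrArg List.length ha
      rw [List.length_cons] at this
      omega

/-- A leaf of the perfect `k`-ary tree of height `h`: a string of length `h`. -/
def IsKLeaf (k h : ℕ) (v : KVert k h) : Prop := v.1.length = h

open Finset

namespace karyTree

variable {k h : ℕ}

lemma exists_walk_length_of_suffix {x y : KVert k h} (hxy : x.1 <:+ y.1) :
    ∃ p : (karyTree k h).Walk y x, p.length = y.1.length - x.1.length := by
  obtain ⟨l, hl⟩ := hxy
  induction l generalizing y with
  | nil =>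
    obtain rfl : y = x := Subtype.ext hl.symm
    exact ⟨.nil, by simp⟩
  | cons a l ih =>
    have hy := y.2
    simp only [← hl, List.length_cons, List.length_append] at hy
    let y' : KVert k h := ⟨l ++ x.1, by simp only [List.length_append]; omega⟩
    have hadj : (karyTree k h).Adj y y' := Or.inl ⟨a, hl.symm⟩
    obtain ⟨p, hp⟩ := ih (y := y') rfl
    refine ⟨.cons hadj p, ?_⟩
    simp only [SimpleGraph.Walk.length_cons, hp, ← hl, List.cons_append, List.length_cons,
      List.length_append, y']
    omega

lemma dist_le_of_suffix {u v w : KVert k h} (hu : w.1 <:+ u.1) (hv : w.1 <:+ v.1) :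
    (karyTree k h).dist u v ≤ (u.1.length - w.1.length) + (v.1.length - w.1.length) := by
  obtain ⟨p, hp⟩ := exists_walk_length_of_suffix hu
  obtain ⟨q, hq⟩ := exists_walk_length_of_suffix hv
  simpa [hp, hq] using SimpleGraph.dist_le (p.append q.reverse)

lemma ecc_le (v : KVert k h) : ecc (karyTree k h) v ≤ v.1.length + h :=
  Finset.sup_le fun u _ => by
    have := dist_le_of_suffix (w := ⟨[], by simp⟩) (u := u) (v := v)
      List.nil_suffix List.nil_suffix
    have := u.2
    simp only [List.length_nil, Nat.sub_zero] at *
    omega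

/-- The level-`l` descendants of the ancestor of `v` at level `s` all lie in `N_r[v]`. -/
lemma pow_le_card_level_ball (v : KVert k h) {r l s : ℕ} (hl : l ≤ h) (hsl : s ≤ l)
    (hsv : s ≤ v.1.length) (hr : l + v.1.length ≤ r + 2 * s) :
    k ^ (l - s) ≤ #{u : KVert k h | u.1.length = l ∧ (karyTree k h).dist u v ≤ r} := by
  set w : KVert k h := ⟨v.1.drop (v.1.length - s), by have := v.2; simp only [List.length_drop]; omega⟩
  have hw : w.1.length = s := by simp only [List.length_drop, w]; omega
  have hlen (g : Fin (l - s) → Fin k) : (List.ofFn g ++ w.1).length = l := by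
    simp only [List.length_append, List.length_ofFn, hw]; omega
  let f (g : Fin (l - s) → Fin k) : KVert k h := ⟨List.ofFn g ++ w.1, (hlen g).trans_le hl⟩
  have hf : Set.InjOn f (univ : Finset (Fin (l - s) → Fin k)) := fun g₁ _ g₂ _ hg =>
    List.ofFn_inj.1 (List.append_cancel_right (congrArg Subtype.val hg))
  have hmaps : ∀ g ∈ (univ : Finset (Fin (l - s) → Fin k)),
      f g ∈ ({u | u.1.length = l ∧ (karyTree k h).dist u v ≤ r} : Finset (KVert k h)) := by
    intro g _
    have := dist_le_of_suffix (u := f g) (List.suffix_append _ _) (List.drop_suffix _ v.1)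
    simp only [mem_filter, mem_univ, true_and, f, hlen, hw] at this ⊢
    omega
  simpa using card_le_card_of_injOn f hmaps hf

lemma pow_min_le_card_level_ball (v : KVert k h) {r l : ℕ} (hl : l ≤ h)
    (hl₁ : l ≤ v.1.length + r) (hl₂ : v.1.length ≤ l + r) :
    k ^ min l ((r + l - v.1.length) / 2) ≤
      #{u : KVert k h | u.1.length = l ∧ (karyTree k h).dist u v ≤ r} := by
  have := pow_le_card_level_ball v (r := r) (s := l - min l ((r + l - v.1.length) / 2)) hl
    (by omega) (by omega) (by omega)
  rwa [Nat.sub_sub_self (min_le_left _ _)] at this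

lemma sum_card_level_ball_le (v : KVert k h) (r : ℕ) {S : Finset (KVert k h)} {L : Finset ℕ}
    (hL : ∀ u : KVert k h, u.1.length ∈ L → u ∈ S) :
    ∑ l ∈ L, #{u : KVert k h | u.1.length = l ∧ (karyTree k h).dist u v ≤ r} ≤
      #{u ∈ S | (karyTree k h).dist u v ≤ r} := by
  have hfiber := sum_card_fiberwise_eq_card_filter
    ({u | (karyTree k h).dist u v ≤ r} : Finset (KVert k h)) L (fun u => u.1.length)
  simp only [filter_filter, and_comm] at hfiber
  rw [hfiber]
  refine card_le_card fun u hu => ?_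
  simp only [mem_filter, mem_univ, true_and] at hu ⊢
  exact ⟨hL u hu.1, hu.2⟩

end karyTree

lemma le_two_pow_sub_two {n : ℕ} (hn : 4 ≤ n) : n ≤ 2 ^ (n - 2) := by
  induction n, hn using Nat.le_induction with
  | base => norm_num
  | succ n hn ih =>
    rw [show n + 1 - 2 = n - 2 + 1 by omega, pow_succ]
    omega

def IsCoverLevel (h t l : ℕ) : Prop :=
  l = h - 1 ∨ (l % 3 = (h - 2) % 3 ∧ 1 + t ≤ l ∧ l ≤ h - 2) ∨ (t ≤ 1 ∧ l = 0) ∨ (t = 2 ∧ l = 1)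

/-- The weights are the lower bounds of `karyTree.pow_min_le_card_level_ball` for a vertex
at level `ℓ` and a ball of radius `r`. -/
def IsLevelCertificate (h t ℓ r : ℕ) (L : Finset ℕ) : Prop :=
  (∀ l ∈ L, IsCoverLevel h t l ∧ l ≤ h ∧ l ≤ ℓ + r ∧ ℓ ≤ l + r) ∧
    r ≤ ∑ l ∈ L, 2 ^ min l ((r + l - ℓ) / 2)

section Certificate

variable {h m t ℓ r : ℕ}

lemma exists_isLevelCertificate_of_near_leaves (hh : 4 ≤ h) (ht : t ≤ 2) (hmt : h = 3 * m + t)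
    (hℓ : ℓ ≤ h) (hr₁ : 1 ≤ r) (hr : r ≤ ℓ + h) (hnear : h ≤ r + ℓ + 1) :
    ∃ L, IsLevelCertificate h t ℓ r L := by
  obtain rfl | hr₂ := hr₁.eq_or_lt
  · refine ⟨{h - 1}, ?_, by simp [Nat.one_le_two_pow]⟩
    simp only [mem_singleton, forall_eq, IsCoverLevel, true_or, true_and]
    omega
  refine ⟨{h - 1, h - 2}, ?_, ?_⟩
  · simp only [mem_insert, mem_singleton, forall_eq_or_imp, forall_eq, IsCoverLevel, true_or,
      true_and]
    omega
  rw [sum_pair (by omega)]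
  set e₁ := min (h - 1) ((r + (h - 1) - ℓ) / 2)
  set e₂ := min (h - 2) ((r + (h - 2) - ℓ) / 2)
  by_cases he₂ : h - 2 ≤ e₂
  · -- both levels are entirely inside the ball
    have h₁ : 2 ^ (h - 2) ≤ 2 ^ e₁ := Nat.pow_le_pow_right two_pos (by omega)
    have h₂ : 2 ^ (h - 2) ≤ 2 ^ e₂ := Nat.pow_le_pow_right two_pos he₂
    have := le_two_pow_sub_two hh
    omega
  · have h₁ := Nat.lt_two_pow_self (n := e₁)
    have h₂ := Nat.lt_two_pow_self (n := e₂)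
    omega

lemma exists_isLevelCertificate_of_chain (hmt : h = 3 * m + t) (hr₁ : 1 ≤ r)
    (hfar : r + ℓ + 2 ≤ h) (hreach : 1 + t ≤ ℓ + r) (hroot : ¬(t = 0 ∧ ℓ = 0 ∧ r = 3)) :
    ∃ L, IsLevelCertificate h t ℓ r L := by
  set l := ℓ + r - (ℓ + r - (1 + t)) % 3
  refine ⟨{l}, ?_, ?_⟩
  · simp only [mem_singleton, forall_eq, IsCoverLevel]
    omega
  rw [sum_singleton]
  have hcases : r - 1 ≤ min l ((r + l - ℓ) / 2) ∨ (4 ≤ r ∧ r - 2 ≤ min l ((r + l - ℓ) / 2)) := by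
    omega
  rcases hcases with he | ⟨hr₄, he⟩
  · calc r ≤ 2 ^ (r - 1) := by have := Nat.lt_two_pow_self (n := r - 1); omega
      _ ≤ _ := Nat.pow_le_pow_right two_pos he
  · exact (le_two_pow_sub_two hr₄).trans (Nat.pow_le_pow_right two_pos he)

lemma exists_isLevelCertificate (hh : 4 ≤ h) (ht : t ≤ 2) (hmt : h = 3 * m + t)
    (hℓ : ℓ ≤ h) (hr₁ : 1 ≤ r) (hr : r ≤ ℓ + h) : ∃ L, IsLevelCertificate h t ℓ r L := by
  by_cases hnear : h ≤ r + ℓ + 1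
  · exact exists_isLevelCertificate_of_near_leaves hh ht hmt hℓ hr₁ hr hnear
  by_cases hroot : t = 0 ∧ ℓ = 0 ∧ r = 3
  · obtain ⟨rfl, rfl, rfl⟩ := hroot
    refine ⟨{0, 1}, ?_, by simp⟩
    simp only [mem_insert, mem_singleton, forall_eq_or_imp, forall_eq, IsCoverLevel, and_true]
    omega
  by_cases hreach : 1 + t ≤ ℓ + r
  · exact exists_isLevelCertificate_of_chain hmt hr₁ (by omega) hreach hroot
  -- `ℓ + r ≤ t ≤ 2`: the ball lies in the top three levels
  by_cases ht₂ : t = 2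
  · refine ⟨{1}, ?_, ?_⟩
    · simp only [mem_singleton, forall_eq, IsCoverLevel, and_true]
      omega
    · rw [sum_singleton]
      have := Nat.lt_two_pow_self (n := min 1 ((r + 1 - ℓ) / 2))
      omega
  · refine ⟨{0}, ?_, by simp only [sum_singleton, Nat.zero_min, pow_zero]; omega⟩
    simp only [mem_singleton, forall_eq, IsCoverLevel, and_true]
    omega

end Certificate

/-- for the perfect binary tree of height `h = 3m + t ≥ 4` (`0 ≤ t ≤ 2`),
the set consisting of all vertices at level `h-1`, all vertices at the levels
`h-2, h-5, …, 1+t`, together with the root if `t ≤ 1` and both vertices at level `1`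
if `t = 2`, is a multicover. -/
theorem stmt12 (h m t : ℕ) (hh : 4 ≤ h) (ht : t ≤ 2) (hmt : h = 3 * m + t) :
    IsMulticover (karyTree 2 h)
      (Finset.univ.filter (fun v : KVert 2 h =>
        v.1.length = h - 1 ∨
        (v.1.length % 3 = (h - 2) % 3 ∧ 1 + t ≤ v.1.length ∧ v.1.length ≤ h - 2) ∨
        (t ≤ 1 ∧ v.1.length = 0) ∨
        (t = 2 ∧ v.1.length = 1))) := by
  intro v r hr₁ hr
  obtain ⟨L, hL, hsum⟩ :=
    exists_isLevelCertificate hh ht hmt v.2 hr₁ (hr.trans (karyTree.ecc_le v))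
  calc r ≤ ∑ l ∈ L, 2 ^ min l ((r + l - v.1.length) / 2) := hsum
    _ ≤ ∑ l ∈ L, #{u : KVert 2 h | u.1.length = l ∧ (karyTree 2 h).dist u v ≤ r} :=
      sum_le_sum fun l hl => karyTree.pow_min_le_card_level_ball v (hL l hl).2.1
        (hL l hl).2.2.1 (hL l hl).2.2.2
    _ ≤ _ := karyTree.sum_card_level_ball_le v r fun u hu => by
      simpa [IsCoverLevel] using (hL _ hu).1
end

section
/- Let T_h be a perfect binary tree of height h = 3m + t ≥ 4 with 0 ≤ t ≤ 2. Then P_b(T_h) = M_c(T_h) = 2^{t+1} · (8^m − 1)/7 + 2^{h−1} + b_t, where b_0 = 1, b_1 = 1, and b_2 = 2. -/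
/-!
A vertex of `karyTree k h` is the string read from the vertex up to the root: the parent of a vertex
is its tail, its ancestors are its suffixes, and `d(x, y) = |x| + |y| - 2 |s|` for the longest
common suffix `s` of `x` and `y`.

Weak duality: if `f` is a packing broadcast and `S` a multicover, the ball of radius `f v` around a
broadcasting vertex `v` contains at least `f v` elements of `S`, and no element of `S` lies in two
of these balls, so `f(V) ≤ |S|`. It therefore suffices to exhibit a multicover and a packing
broadcast of `T_h` of the same size. The multicover consists of the root, the levels `h - 1`,
`h - 2`, `h - 5`, …, `t + 1`, and one child of the root when `t = 2`; a ball of radius `r` around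
`v` contains `r` of its vertices among the descendants, on one or two of these levels, of a suitable
ancestor of `v`. The packing broadcast gives the root the power `3, 1, 2` for `t = 0, 1, 2`, power
`1` to every left child on the levels `h - 4, h - 7, …` out of reach of the root, and, below each
vertex `q` of level `h - 2`, power `2` to the leaf `00q` and power `1` to the leaf `01q`.
-/

variable {V : Type*}

open Finset

namespace KaryTree

variable {k h : ℕ}

lemma exists_walk_of_suffix (l : List (Fin k)) (hl : l.length ≤ h) {s : List (Fin k)}
    (hs : s <:+ l) :
    ∃ w : (karyTree k h).Walk ⟨l, hl⟩ ⟨s, hs.length_le.trans hl⟩,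
      w.length = l.length - s.length := by
  induction l with
  | nil =>
    obtain rfl := List.suffix_nil.1 hs
    exact ⟨.nil, rfl⟩
  | cons a l ih =>
    rcases List.suffix_cons_iff.1 hs with rfl | hs'
    · exact ⟨.nil, by simp⟩
    · obtain ⟨w, hw⟩ := ih (by simp only [List.length_cons] at hl; omega) hs'
      refine ⟨.cons (show (karyTree k h).Adj _ _ from Or.inl ⟨a, rfl⟩) w, ?_⟩
      rw [SimpleGraph.Walk.length_cons, hw]
      have := hs'.length_le
      simp only [List.length_cons]
      omega

lemma dist_add_two_mul_le {x y : KVert k h} {s : List (Fin k)} (hx : s <:+ x.1)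
    (hy : s <:+ y.1) :
    (karyTree k h).dist x y + 2 * s.length ≤ x.1.length + y.1.length := by
  obtain ⟨x, hx'⟩ := x
  obtain ⟨y, hy'⟩ := y
  dsimp only at hx hy ⊢
  obtain ⟨wx, hwx⟩ := exists_walk_of_suffix x hx' hx
  obtain ⟨wy, hwy⟩ := exists_walk_of_suffix y hy' hy
  have := (karyTree k h).dist_le (wx.append wy.reverse)
  simp only [SimpleGraph.Walk.length_append, SimpleGraph.Walk.length_reverse] at this
  have := hx.length_le
  have := hy.length_le
  omega

lemma dist_le_length_add_length (x y : KVert k h) :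
    (karyTree k h).dist x y ≤ x.1.length + y.1.length :=
  (Nat.le_add_right _ _).trans (dist_add_two_mul_le (s := []) List.nil_suffix List.nil_suffix)

lemma connected : (karyTree k h).Connected := by
  refine (SimpleGraph.connected_iff _).2 ⟨fun x y => ?_, ⟨⟨[], by simp⟩⟩⟩
  obtain ⟨wx, -⟩ := exists_walk_of_suffix x.1 x.2 List.nil_suffix
  obtain ⟨wy, -⟩ := exists_walk_of_suffix y.1 y.2 List.nil_suffix
  exact ⟨wx.append wy.reverse⟩

lemma exists_suffix_of_walk {x y : KVert k h} (w : (karyTree k h).Walk x y) :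
    ∃ s : List (Fin k), s <:+ x.1 ∧ s <:+ y.1 ∧
      x.1.length + y.1.length ≤ w.length + 2 * s.length := by
  induction w with
  | nil => exact ⟨_, List.suffix_refl _, List.suffix_refl _,
    by simp only [SimpleGraph.Walk.length_nil]; omega⟩
  | @cons x x' y hadj w ih =>
    obtain ⟨s, hsx', hsy, hlen⟩ := ih
    simp only [SimpleGraph.Walk.length_cons]
    rcases hadj with ⟨a, hx⟩ | ⟨a, hx'⟩
    · refine ⟨s, hsx'.trans (hx ▸ List.suffix_cons a x'.1), hsy, ?_⟩
      have : x.1.length = x'.1.length + 1 := by rw [hx]; rfl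
      omega
    · have hlen' : x'.1.length = x.1.length + 1 := by rw [hx']; rfl
      rw [hx'] at hsx'
      rcases List.suffix_cons_iff.1 hsx' with rfl | hsx
      · exact ⟨x.1, List.suffix_refl _, (List.suffix_cons a x.1).trans hsy,
          by simp only [List.length_cons] at hlen; omega⟩
      · exact ⟨s, hsx, hsy, by omega⟩

lemma exists_suffix_le_dist (x y : KVert k h) :
    ∃ s : List (Fin k), s <:+ x.1 ∧ s <:+ y.1 ∧
      x.1.length + y.1.length ≤ (karyTree k h).dist x y + 2 * s.length := by
  obtain ⟨w, hw⟩ := connected.exists_walk_length_eq_dist x y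
  exact hw ▸ exists_suffix_of_walk w

lemma length_sub_length_le_dist (x y : KVert k h) :
    x.1.length - y.1.length ≤ (karyTree k h).dist x y := by
  obtain ⟨s, -, hsy, hle⟩ := exists_suffix_le_dist x y
  have := hsy.length_le
  omega

lemma le_dist_of_drop_ne {x y : KVert k h} (hlen : x.1.length = y.1.length) {j : ℕ}
    (hne : x.1.drop j ≠ y.1.drop j) : 2 * j + 2 ≤ (karyTree k h).dist x y := by
  obtain ⟨s, hsx, hsy, hle⟩ := exists_suffix_le_dist x y
  by_contra! hd
  apply hne
  have hj : (x.1.drop j).length ≤ s.length := by simp only [List.length_drop]; omega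
  have hx := List.suffix_of_suffix_length_le (List.drop_suffix j x.1) hsx hj
  have hy := List.suffix_of_suffix_length_le (List.drop_suffix j y.1) hsy (by simpa [hlen] using hj)
  rw [List.suffix_iff_eq_drop.1 hx, List.suffix_iff_eq_drop.1 hy]
  simp [hlen]

def root : KVert k h := ⟨[], Nat.zero_le h⟩

lemma ecc_le (v : KVert k h) : ecc (karyTree k h) v ≤ h + v.1.length :=
  Finset.sup_le fun u _ => (dist_le_length_add_length u v).trans (by have := u.2; omega)

lemma dist_le_ecc (u v : KVert k h) : (karyTree k h).dist u v ≤ ecc (karyTree k h) v :=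
  Finset.le_sup (f := fun u => (karyTree k h).dist u v) (Finset.mem_univ u)

lemma length_le_ecc (v : KVert k h) : v.1.length ≤ ecc (karyTree k h) v := by
  simpa [root] using (length_sub_length_le_dist v root).trans
    ((SimpleGraph.dist_comm).le.trans (dist_le_ecc root v))

lemma le_ecc_root [NeZero k] : h ≤ ecc (karyTree k h) root := by
  simpa [root] using (length_sub_length_le_dist ⟨List.replicate h 0, by simp⟩ root).trans
    (dist_le_ecc _ root)

lemma card_filter_length_suffix {n : ℕ} (σ : List (Fin k)) (hσ : σ.length ≤ n) (hn : n ≤ h) :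
    #{u : KVert k h | u.1.length = n ∧ σ <:+ u.1} = k ^ (n - σ.length) := by
  have hk : k ^ (n - σ.length) = #(univ : Finset (List.Vector (Fin k) (n - σ.length))) := by
    simp
  rw [hk]
  refine card_bij' (fun u hu => ⟨u.1.take (n - σ.length),
    by simp only [mem_filter, mem_univ, true_and] at hu; simp [hu.1]⟩)
    (fun p _ => ⟨p.1 ++ σ, by simp only [List.length_append, p.2]; omega⟩)
    (fun _ _ => mem_univ _) ?_ ?_ ?_
  · intro p _
    simp only [mem_filter, mem_univ, true_and, List.length_append, p.2, List.suffix_append,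
      and_true]
    omega
  · rintro ⟨u, hu⟩ hmem
    simp only [mem_filter, mem_univ, true_and] at hmem
    obtain ⟨hlen, hsuf⟩ := hmem
    rw [List.suffix_iff_eq_drop, hlen] at hsuf
    exact Subtype.ext ((congrArg (u.take (n - σ.length) ++ ·) hsuf).trans
      (List.take_append_drop _ _))
  · rintro ⟨p, hp⟩ _
    ext1
    simp [List.take_left' hp]

lemma card_filter_length_prefix {n : ℕ} (π : List (Fin k)) (hπ : π.length ≤ n) (hn : n ≤ h) :
    #{u : KVert k h | u.1.length = n ∧ π <+: u.1} = k ^ (n - π.length) := by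
  have hk : k ^ (n - π.length) = #(univ : Finset (List.Vector (Fin k) (n - π.length))) := by
    simp
  rw [hk]
  refine card_bij' (fun u hu => ⟨u.1.drop π.length,
    by simp only [mem_filter, mem_univ, true_and] at hu; simp [hu.1]⟩)
    (fun p _ => ⟨π ++ p.1, by simp only [List.length_append, p.2]; omega⟩)
    (fun _ _ => mem_univ _) ?_ ?_ ?_
  · intro p _
    simp only [mem_filter, mem_univ, true_and, List.length_append, p.2, List.prefix_append,
      and_true]
    omega
  · rintro ⟨u, hu⟩ hmem
    simp only [mem_filter, mem_univ, true_and] at hmem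
    ext1
    dsimp only
    conv_rhs => rw [← List.take_append_drop π.length u]
    rw [← List.prefix_iff_eq_take.1 hmem.2]
  · rintro ⟨p, hp⟩ _
    ext1
    simp

lemma card_filter_length_mem_prefix (L : Finset ℕ) (π : List (Fin k))
    (hL : ∀ n ∈ L, π.length ≤ n ∧ n ≤ h) :
    #{u : KVert k h | u.1.length ∈ L ∧ π <+: u.1} = ∑ n ∈ L, k ^ (n - π.length) := by
  rw [card_eq_sum_card_fiberwise (f := fun u : KVert k h => u.1.length) (t := L)
    (fun u hu => (mem_filter.1 hu).2.1)]
  refine sum_congr rfl fun n hn => ?_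
  rw [← card_filter_length_prefix π (hL n hn).1 (hL n hn).2, filter_filter]
  congr 1
  ext u
  simp only [mem_filter, mem_univ, true_and]
  constructor
  · rintro ⟨⟨-, hπ⟩, rfl⟩
    exact ⟨rfl, hπ⟩
  · rintro ⟨rfl, hπ⟩
    exact ⟨⟨hn, hπ⟩, rfl⟩

/-- The vertices at level `n` below the ancestor of `v` at level `c`. -/
noncomputable def descendantsAt (v : KVert k h) (c n : ℕ) : Finset (KVert k h) :=
  {u | u.1.length = n ∧ v.1.drop (v.1.length - c) <:+ u.1}

lemma card_descendantsAt {v : KVert k h} {c n : ℕ} (hcn : c ≤ n) (hn : n ≤ h)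
    (hcv : c ≤ v.1.length) : #(descendantsAt v c n) = k ^ (n - c) := by
  have hlen : (v.1.drop (v.1.length - c)).length = c := by
    simp only [List.length_drop]; omega
  rw [descendantsAt, card_filter_length_suffix _ (by rw [hlen]; exact hcn) hn, hlen]

lemma dist_add_two_mul_le_of_mem_descendantsAt {v u : KVert k h} {c n : ℕ}
    (hcv : c ≤ v.1.length) (hu : u ∈ descendantsAt v c n) :
    (karyTree k h).dist u v + 2 * c ≤ n + v.1.length := by
  simp only [descendantsAt, mem_filter, mem_univ, true_and] at hu
  have := dist_add_two_mul_le hu.2 (List.drop_suffix _ v.1)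
  simp only [List.length_drop, hu.1] at this
  omega

end KaryTree

section Duality

variable [Fintype V] {G : SimpleGraph V}

lemma IsPackingBroadcast.sum_le_card {f : V → ℕ} {S : Finset V} (hf : IsPackingBroadcast G f)
    (hS : IsMulticover G S) : ∑ v, f v ≤ #S := by
  classical
  calc ∑ v, f v ≤ ∑ v, #(S.bipartiteAbove (fun v u => Hears G f u v) v) := by
        refine sum_le_sum fun v _ => ?_
        rcases (f v).eq_zero_or_pos with h0 | hpos
        · simp [h0]
        · refine (hS v (f v) hpos (hf.1 v)).trans (card_le_card fun u hu => ?_)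
          simp only [mem_filter] at hu
          exact (mem_bipartiteAbove _).2 ⟨hu.1, hpos, hu.2⟩
    _ = ∑ u ∈ S, #(univ.bipartiteBelow (fun v u => Hears G f u v) u) :=
        sum_card_bipartiteAbove_eq_sum_card_bipartiteBelow _
    _ ≤ ∑ _u ∈ S, 1 := sum_le_sum fun u _ => card_le_one.2 fun v hv w hw =>
        hf.2 u ((mem_bipartiteBelow _).1 hv).2 ((mem_bipartiteBelow _).1 hw).2
    _ = #S := by simp

lemma Pb_eq_card_and_Mc_eq_card {f : V → ℕ} {S : Finset V} (hf : IsPackingBroadcast G f)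
    (hS : IsMulticover G S) (hfS : ∑ v, f v = #S) : Pb G = #S ∧ Mc G = #S := by
  refine ⟨IsGreatest.csSup_eq ⟨⟨f, hf, hfS.symm⟩, ?_⟩, IsLeast.csInf_eq ⟨⟨S, hS, rfl⟩, ?_⟩⟩
  · rintro _ ⟨g, hg, rfl⟩
    exact hg.sum_le_card hS
  · rintro _ ⟨T, hT, rfl⟩
    exact hfS ▸ hf.sum_le_card hT

lemma isPackingBroadcast_of_add_lt_dist {f : V → ℕ} (hG : G.Connected) (hf : IsBroadcast G f)
    (hlt : ∀ v w, 0 < f v → 0 < f w → v ≠ w → f v + f w < G.dist v w) :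
    IsPackingBroadcast G f := by
  refine ⟨hf, fun u v ⟨hv, huv⟩ w ⟨hw, huw⟩ => ?_⟩
  by_contra hvw
  have := hG.dist_triangle (u := v) (v := u) (w := w)
  have := SimpleGraph.dist_comm (G := G) (u := v) (v := u)
  have := hlt v w hv hw hvw
  omega

end Duality

lemma two_mul_le_two_pow (n : ℕ) : 2 * n ≤ 2 ^ n := by
  rcases n with _ | n
  · simp
  · have := n.lt_two_pow_self
    rw [pow_succ]
    omega

lemma sum_filter_range_mod_three (g : ℕ → ℕ) (a M : ℕ) :
    ∑ n ∈ (range M).filter (fun n => a ≤ n ∧ n % 3 = a % 3), g n =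
      ∑ i ∈ range ((M + 2 - a) / 3), g (a + 3 * i) := by
  induction M with
  | zero => simp [show (2 - a) / 3 = 0 by omega]
  | succ M ih =>
    rw [range_add_one, filter_insert]
    split_ifs with hM
    · rw [sum_insert (by simp), ih, show (M + 1 + 2 - a) / 3 = (M + 2 - a) / 3 + 1 by omega,
        sum_range_succ, show a + 3 * ((M + 2 - a) / 3) = M by omega, add_comm]
    · rw [ih, show (M + 1 + 2 - a) / 3 = (M + 2 - a) / 3 by omega]

lemma sum_range_two_pow_add_three_mul (a K : ℕ) :
    ∑ i ∈ range K, 2 ^ (a + 3 * i) = 2 ^ a * ((8 ^ K - 1) / 7) := by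
  simp_rw [pow_add, pow_mul, ← mul_sum]
  rw [Nat.geomSum_eq (by norm_num)]
  norm_num

namespace PerfectBinaryTree

open KaryTree

variable {h : ℕ}

/-- Levels `0` and `h - 1`, and every third level from `h - 2` down to `h % 3 + 1`. -/
def coverLevels (h : ℕ) : Finset ℕ :=
  insert 0 (insert (h - 1)
    ((range (h - 1)).filter fun n => h % 3 + 1 ≤ n ∧ n % 3 = (h % 3 + 1) % 3))

noncomputable def coverSet (h : ℕ) : Finset (KVert 2 h) :=
  {u | u.1.length ∈ coverLevels h ∨ (h % 3 = 2 ∧ u.1 = [0])}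

/-- All vertices of level `n` below the level-`c` ancestor of `v` lie in `coverSet h` and within
distance `r` of `v`. -/
def IsCoverBlock (v : KVert 2 h) (r c n : ℕ) : Prop :=
  n ∈ coverLevels h ∧ n ≤ h ∧ c ≤ n ∧ c ≤ v.1.length ∧ n + v.1.length ≤ r + 2 * c

lemma IsCoverBlock.subset {v : KVert 2 h} {r c n : ℕ} (hb : IsCoverBlock v r c n) :
    descendantsAt v c n ⊆ {u ∈ coverSet h | (karyTree 2 h).dist u v ≤ r} := by
  intro u hu
  have := dist_add_two_mul_le_of_mem_descendantsAt hb.2.2.2.1 hu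
  simp only [descendantsAt, mem_filter, mem_univ, true_and] at hu
  simp only [coverSet, mem_filter, mem_univ, true_and, hu.1]
  exact ⟨Or.inl hb.1, by have := hb.2.2.2.2; omega⟩

lemma IsCoverBlock.pow_le {v : KVert 2 h} {r c n : ℕ} (hb : IsCoverBlock v r c n) :
    2 ^ (n - c) ≤ #{u ∈ coverSet h | (karyTree 2 h).dist u v ≤ r} :=
  card_descendantsAt (v := v) hb.2.2.1 hb.2.1 hb.2.2.2.1 ▸ card_le_card hb.subset

lemma IsCoverBlock.pow_add_pow_le {v : KVert 2 h} {r c₁ n₁ c₂ n₂ : ℕ}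
    (hb₁ : IsCoverBlock v r c₁ n₁) (hb₂ : IsCoverBlock v r c₂ n₂) (hn : n₁ ≠ n₂) :
    2 ^ (n₁ - c₁) + 2 ^ (n₂ - c₂) ≤ #{u ∈ coverSet h | (karyTree 2 h).dist u v ≤ r} := by
  have hdisj : Disjoint (descendantsAt v c₁ n₁) (descendantsAt v c₂ n₂) := by
    simp only [descendantsAt, disjoint_filter]
    rintro u - ⟨rfl, -⟩ ⟨h₂, -⟩
    exact hn h₂
  rw [← card_descendantsAt hb₁.2.2.1 hb₁.2.1 hb₁.2.2.2.1,
    ← card_descendantsAt hb₂.2.2.1 hb₂.2.1 hb₂.2.2.2.1, ← card_union_of_disjoint hdisj]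
  exact card_le_card (union_subset hb₁.subset hb₂.subset)

lemma isCoverBlock_iff {v : KVert 2 h} {r c n : ℕ} :
    IsCoverBlock v r c n ↔ (n = 0 ∨ n = h - 1 ∨
      (n < h - 1 ∧ h % 3 + 1 ≤ n ∧ n % 3 = (h % 3 + 1) % 3)) ∧
      n ≤ h ∧ c ≤ n ∧ c ≤ v.1.length ∧ n + v.1.length ≤ r + 2 * c := by
  simp only [IsCoverBlock, coverLevels, mem_insert, mem_filter, mem_range]

lemma le_card_ball_of_reach (v : KVert 2 h) {r : ℕ} (hr : 1 ≤ r)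
    (hrh : r ≤ h + v.1.length) (hreach : h ≤ v.1.length + r + 1)
    (hv : v.1.length + 2 ≤ h ∨ r = 1) :
    r ≤ #{u ∈ coverSet h | (karyTree 2 h).dist u v ≤ r} := by
  have := v.2
  have hb : IsCoverBlock v r ((h + v.1.length - r) / 2) (h - 1) := by
    rw [isCoverBlock_iff]; omega
  have := two_mul_le_two_pow (h - 1 - (h + v.1.length - r) / 2)
  have := Nat.one_le_two_pow (n := h - 1 - (h + v.1.length - r) / 2)
  exact le_trans (by omega) hb.pow_le

lemma le_card_ball_of_bottom (hh : 4 ≤ h) (v : KVert 2 h) {r : ℕ} (hr : 2 ≤ r)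
    (hrh : r ≤ h + v.1.length) (hv : h ≤ v.1.length + 1) :
    r ≤ #{u ∈ coverSet h | (karyTree 2 h).dist u v ≤ r} := by
  have := v.2
  set c₁ := (h + v.1.length - r) / 2
  set c₂ := (h + v.1.length - 1 - r) / 2
  have hb₁ : IsCoverBlock v r c₁ (h - 1) := by rw [isCoverBlock_iff]; omega
  have hb₂ : IsCoverBlock v r c₂ (h - 2) := by rw [isCoverBlock_iff]; omega
  have := two_mul_le_two_pow (h - 1 - c₁)
  have := two_mul_le_two_pow (h - 2 - c₂)
  have := (h - 1 - c₁).lt_two_pow_self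
  have := (h - 2 - c₂).lt_two_pow_self
  exact le_trans (by omega) (hb₁.pow_add_pow_le hb₂ (by omega))

lemma two_le_card_ball_root (h2 : h % 3 = 2) :
    2 ≤ #{u ∈ coverSet h | (karyTree 2 h).dist u root ≤ 2} := by
  let w : KVert 2 h := ⟨[0], by simp only [List.length_singleton]; omega⟩
  have hsub : {root, w} ⊆ {u ∈ coverSet h | (karyTree 2 h).dist u root ≤ 2} := by
    intro u hu
    simp only [mem_insert, mem_singleton] at hu
    rcases hu with rfl | rfl
    · exact mem_filter.2 ⟨mem_filter.2 ⟨mem_univ _, Or.inl (mem_insert_self 0 _)⟩, by simp⟩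
    · exact mem_filter.2 ⟨mem_filter.2 ⟨mem_univ _, Or.inr ⟨h2, rfl⟩⟩,
        (dist_le_length_add_length w root).trans (by simp [w, root])⟩
  have hne : (root : KVert 2 h) ≠ w := by simp [root, w]
  exact (card_pair hne).symm.le.trans (card_le_card hsub)

lemma le_card_ball_of_top (v : KVert 2 h) {r : ℕ} (hr : 1 ≤ r)
    (hv : v.1.length + r + 2 ≤ h) :
    r ≤ #{u ∈ coverSet h | (karyTree 2 h).dist u v ≤ r} := by
  by_cases hlow : v.1.length + r ≤ h % 3
  · have hb : IsCoverBlock v r 0 0 := by rw [isCoverBlock_iff]; omega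
    rcases (show r = 1 ∨ r = 2 by omega) with rfl | rfl
    · exact hb.pow_le
    · obtain rfl : v = root := Subtype.ext (List.eq_nil_of_length_eq_zero (by omega))
      exact two_le_card_ball_root (by omega)
  -- the largest level `≤ |v| + r` congruent to `h + 1` modulo 3
  set l := v.1.length + r - (v.1.length + r - (h % 3 + 1)) % 3
  by_cases hl : r ≤ l + 1
  · have hb : IsCoverBlock v r (min v.1.length (l + 1 - r)) l := by
      rw [isCoverBlock_iff]; omega
    have := (l - min v.1.length (l + 1 - r)).lt_two_pow_self
    exact le_trans (by omega) hb.pow_le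
  · have hb : IsCoverBlock v r 0 l := by rw [isCoverBlock_iff]; omega
    have hb₀ : IsCoverBlock v r 0 0 := by rw [isCoverBlock_iff]; omega
    have := l.lt_two_pow_self
    exact le_trans (by simp only [Nat.sub_zero, pow_zero]; omega)
      (hb.pow_add_pow_le hb₀ (by omega))

theorem isMulticover_coverSet (hh : 4 ≤ h) : IsMulticover (karyTree 2 h) (coverSet h) := by
  intro v r hr hre
  have := v.2
  have hrh := hre.trans (ecc_le v)
  by_cases hreach : h ≤ v.1.length + r + 1 ∧ (v.1.length + 2 ≤ h ∨ r = 1)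
  · exact le_card_ball_of_reach v hr hrh hreach.1 hreach.2
  by_cases hv : h ≤ v.1.length + 1
  · exact le_card_ball_of_bottom hh v (by omega) hrh hv
  · exact le_card_ball_of_top v hr (by omega)

variable {m t : ℕ}

lemma sum_coverLevels (hh : 4 ≤ h) (ht : t ≤ 2) (hmt : h = 3 * m + t) :
    ∑ n ∈ coverLevels h, 2 ^ n = 1 + 2 ^ (h - 1) + 2 ^ (t + 1) * ((8 ^ m - 1) / 7) := by
  have hmod : h % 3 = t := by omega
  rw [coverLevels, sum_insert (by simp only [mem_insert, mem_filter, mem_range]; omega),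
    sum_insert (by simp), sum_filter_range_mod_three, hmod, show (h - 1 + 2 - (t + 1)) / 3 = m by omega,
    sum_range_two_pow_add_three_mul]
  ring

lemma card_coverSet (hh : 4 ≤ h) (ht : t ≤ 2) (hmt : h = 3 * m + t) :
    #(coverSet h) = 2 ^ (t + 1) * ((8 ^ m - 1) / 7) + 2 ^ (h - 1) + (if t = 2 then 2 else 1) := by
  have hlevels : #{u : KVert 2 h | u.1.length ∈ coverLevels h} = ∑ n ∈ coverLevels h, 2 ^ n := by
    simpa using card_filter_length_mem_prefix (h := h) (coverLevels h) []
      (fun n hn => ⟨Nat.zero_le n,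
        by simp only [coverLevels, mem_insert, mem_filter, mem_range] at hn; omega⟩)
  have hextra : #{u : KVert 2 h | h % 3 = 2 ∧ u.1 = [0]} = if t = 2 then 1 else 0 := by
    split_ifs with ht2
    · refine card_eq_one.2 ⟨⟨[0], by simp only [List.length_singleton]; omega⟩, ?_⟩
      ext u
      simp only [mem_filter, mem_univ, true_and, mem_singleton, Subtype.ext_iff]
      exact ⟨fun hu => hu.2, fun hu => ⟨by omega, hu⟩⟩
    · exact card_eq_zero.2 (filter_eq_empty_iff.2 fun u _ ⟨h2, _⟩ => ht2 (by omega))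
  rw [coverSet, filter_or, card_union_of_disjoint, hlevels, hextra, sum_coverLevels hh ht hmt]
  · split_ifs <;> ring
  · refine disjoint_filter.2 fun u _ hu ⟨h2, hu0⟩ => ?_
    rw [hu0] at hu
    simp only [coverLevels, mem_insert, mem_filter, mem_range, List.length_singleton] at hu
    omega

/-- `3`, `1`, `2` for `h ≡ 0, 1, 2 (mod 3)`. -/
def rootPower (h : ℕ) : ℕ := (h + 2) % 3 + 1

def broadcastLevels (h : ℕ) : Finset ℕ :=
  (range (h - 3)).filter fun n => rootPower h + 2 ≤ n ∧ n % 3 = (rootPower h + 2) % 3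

noncomputable def packingBroadcast (h : ℕ) (u : KVert 2 h) : ℕ :=
  (if u = root then rootPower h else 0) +
  (if u.1.length = h ∧ [0, 0] <+: u.1 then 2 else 0) +
  (if u.1.length = h ∧ [0, 1] <+: u.1 then 1 else 0) +
  (if u.1.length ∈ broadcastLevels h ∧ [0] <+: u.1 then 1 else 0)

variable {v w : KVert 2 h}

lemma packingBroadcast_root : packingBroadcast h root = rootPower h := by
  simp [packingBroadcast, root, broadcastLevels]

lemma packingBroadcast_of_length_eq (hh : 0 < h) (hv : v.1.length = h) :
    packingBroadcast h v =
      (if [0, 0] <+: v.1 then 2 else 0) + (if [0, 1] <+: v.1 then 1 else 0) := by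
  have hv0 : v ≠ root := by
    rintro rfl
    simp only [root, List.length_nil] at hv
    omega
  simp [packingBroadcast, hv0, hv, broadcastLevels]

lemma packingBroadcast_of_length_lt (hv0 : v ≠ root) (hvh : v.1.length < h) :
    packingBroadcast h v = if v.1.length ∈ broadcastLevels h ∧ [0] <+: v.1 then 1 else 0 := by
  simp [packingBroadcast, hv0, hvh.ne]

lemma exists_eq_cons_cons_of_length_eq (hh : 0 < h) (hv : v.1.length = h)
    (hfv : 0 < packingBroadcast h v) :
    ∃ (b : Fin 2) (q : List (Fin 2)), v.1 = 0 :: b :: q ∧ packingBroadcast h v + b = 2 := by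
  rw [packingBroadcast_of_length_eq hh hv] at hfv ⊢
  by_cases h00 : [0, 0] <+: v.1
  · obtain ⟨q, hq⟩ := h00
    exact ⟨0, q, hq.symm, by simp [← hq]⟩
  by_cases h01 : [0, 1] <+: v.1
  · obtain ⟨q, hq⟩ := h01
    exact ⟨1, q, hq.symm, by simp [← hq]⟩
  simp [h00, h01] at hfv

lemma packingBroadcast_pos_cases (hh : 0 < h) (hv : 0 < packingBroadcast h v) :
    (v = root ∧ packingBroadcast h v = rootPower h) ∨
    (v.1.length = h ∧ packingBroadcast h v ≤ 2) ∨
    (rootPower h + 2 ≤ v.1.length ∧ v.1.length + 4 ≤ h ∧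
      v.1.length % 3 = (rootPower h + 2) % 3 ∧ [0] <+: v.1 ∧ packingBroadcast h v = 1) := by
  by_cases hv0 : v = root
  · exact Or.inl ⟨hv0, hv0 ▸ packingBroadcast_root⟩
  by_cases hvh : v.1.length = h
  · obtain ⟨b, -, -, hb⟩ := exists_eq_cons_cons_of_length_eq hh hvh hv
    exact Or.inr (Or.inl ⟨hvh, by omega⟩)
  rw [packingBroadcast_of_length_lt hv0 (lt_of_le_of_ne v.2 hvh)] at hv ⊢
  split_ifs at hv with hmid
  · have := hmid.1
    simp only [broadcastLevels, mem_filter, mem_range] at this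
    exact Or.inr (Or.inr ⟨this.2.1, by omega, this.2.2, hmid.2, if_pos hmid⟩)
  · simp at hv

lemma add_lt_dist_of_length_eq_height (hh : 0 < h) (hv : v.1.length = h) (hw : w.1.length = h)
    (hvw : v ≠ w) (hfv : 0 < packingBroadcast h v) (hfw : 0 < packingBroadcast h w) :
    packingBroadcast h v + packingBroadcast h w < (karyTree 2 h).dist v w := by
  obtain ⟨b, q, hvq, hbv⟩ := exists_eq_cons_cons_of_length_eq hh hv hfv
  obtain ⟨b', q', hwq, hbw⟩ := exists_eq_cons_cons_of_length_eq hh hw hfw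
  have hlen : v.1.length = w.1.length := hv.trans hw.symm
  by_cases hb : b = b'
  · subst hb
    have hq : v.1.drop 2 ≠ w.1.drop 2 := by
      simpa [hvq, hwq] using fun hqq => hvw (Subtype.ext (by rw [hvq, hwq, hqq]))
    have := le_dist_of_drop_ne hlen hq
    omega
  · have hq : v.1.drop 1 ≠ w.1.drop 1 := by simp [hvq, hwq, hb]
    have := le_dist_of_drop_ne hlen hq
    have : (b : ℕ) ≠ b' := Fin.val_injective.ne hb
    omega

lemma add_lt_dist (hh : 4 ≤ h) (hvw : v ≠ w) (hfv : 0 < packingBroadcast h v)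
    (hfw : 0 < packingBroadcast h w) :
    packingBroadcast h v + packingBroadcast h w < (karyTree 2 h).dist v w := by
  have hvw' := length_sub_length_le_dist v w
  have hwv' := length_sub_length_le_dist w v
  rw [SimpleGraph.dist_comm] at hwv'
  have hp : rootPower h = (h + 2) % 3 + 1 := rfl
  have hroot : (root : KVert 2 h).1.length = 0 := rfl
  rcases packingBroadcast_pos_cases (by omega) hfv with
    ⟨rfl, hv⟩ | ⟨hvh, hv⟩ | ⟨hvlo, hvhi, hvmod, hv0, hv⟩ <;>
  rcases packingBroadcast_pos_cases (by omega) hfw with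
    ⟨rfl, hw⟩ | ⟨hwh, hw⟩ | ⟨hwlo, hwhi, hwmod, hw0, hw⟩
  · exact absurd rfl hvw
  -- on different levels, the level difference alone separates the two balls
  any_goals omega
  · exact add_lt_dist_of_length_eq_height (by omega) hvh hwh hvw hfv hfw
  · by_cases hlen : v.1.length = w.1.length
    · obtain ⟨q, hq⟩ := hv0
      obtain ⟨q', hq'⟩ := hw0
      have hne : v.1.drop 1 ≠ w.1.drop 1 := by
        rw [← hq, ← hq']
        simpa using fun hqq => hvw (Subtype.ext (by rw [← hq, ← hq', hqq]))
      have := le_dist_of_drop_ne hlen hne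
      omega
    · omega

theorem isPackingBroadcast_packingBroadcast (hh : 4 ≤ h) :
    IsPackingBroadcast (karyTree 2 h) (packingBroadcast h) := by
  refine isPackingBroadcast_of_add_lt_dist connected (fun v => ?_)
    fun v w hv hw hvw => add_lt_dist hh hvw hv hw
  rcases (packingBroadcast h v).eq_zero_or_pos with h0 | hpos
  · simp [h0]
  have := length_le_ecc v
  rcases packingBroadcast_pos_cases (by omega) hpos with ⟨rfl, hv⟩ | ⟨hvh, hv⟩ | ⟨hvl, -, -, -, hv⟩
  · have := le_ecc_root (k := 2) (h := h)
    have : rootPower h ≤ 3 := by unfold rootPower; omega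
    omega
  · omega
  · omega

lemma sum_packingBroadcast (hh : 4 ≤ h) (ht : t ≤ 2) (hmt : h = 3 * m + t) :
    ∑ u, packingBroadcast h u =
      2 ^ (t + 1) * ((8 ^ m - 1) / 7) + 2 ^ (h - 1) + (if t = 2 then 2 else 1) := by
  have hleaf (b : Fin 2) : #{u : KVert 2 h | u.1.length = h ∧ [0, b] <+: u.1} = 2 ^ (h - 2) :=
    card_filter_length_prefix [0, b] (by simp only [List.length_cons, List.length_nil]; omega)
      le_rfl
  have hmid : #{u : KVert 2 h | u.1.length ∈ broadcastLevels h ∧ [0] <+: u.1} =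
      ∑ i ∈ range ((h - rootPower h - 3) / 3), 2 ^ (rootPower h + 1 + 3 * i) := by
    rw [card_filter_length_mem_prefix _ _ fun n hn => by
      simp only [broadcastLevels, mem_filter, mem_range, List.length_singleton] at hn ⊢; omega,
      broadcastLevels, sum_filter_range_mod_three,
      show h - 3 + 2 - (rootPower h + 2) = h - rootPower h - 3 by omega]
    refine sum_congr rfl fun i _ => ?_
    congr 1
    simp
  simp only [packingBroadcast, sum_add_distrib, sum_ite_eq', mem_univ, if_true]
  simp only [← sum_filter, sum_const, smul_eq_mul, hleaf, hmid]
  clear hleaf hmid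
  have h2 : 2 ^ (h - 1) = 2 * 2 ^ (h - 2) := by rw [← pow_succ']; congr 1; omega
  rw [← sum_range_two_pow_add_three_mul, h2]
  rcases (by omega : t = 0 ∨ t ≠ 0) with rfl | ht0
  · obtain ⟨K, rfl⟩ : ∃ K, m = K + 2 := ⟨m - 2, by omega⟩
    rw [show rootPower h = 3 by unfold rootPower; omega, show (h - 3 - 3) / 3 = K by omega,
      sum_range_succ', sum_range_succ, show 0 + 1 + 3 * (K + 1) = h - 2 by omega]
    have : ∀ i, 0 + 1 + 3 * (i + 1) = 3 + 1 + 3 * i := by omega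
    simp only [this, if_neg (show 0 ≠ 2 by decide)]
    omega
  · obtain ⟨K, rfl⟩ : ∃ K, m = K + 1 := ⟨m - 1, by omega⟩
    rw [show rootPower h = t by unfold rootPower; omega, show (h - t - 3) / 3 = K by omega,
      sum_range_succ, show t + 1 + 3 * K = h - 2 by omega]
    split_ifs <;> omega

end PerfectBinaryTree

/-- for the perfect binary tree of height `h = 3m + t ≥ 4` (`0 ≤ t ≤ 2`),
`P_b(T_h) = M_c(T_h) = 2^(t+1) · (8^m - 1)/7 + 2^(h-1) + b_t`, where `b_0 = b_1 = 1` and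
`b_2 = 2`. -/
theorem stmt13 (h m t : ℕ) (hh : 4 ≤ h) (ht : t ≤ 2) (hmt : h = 3 * m + t) :
    Pb (karyTree 2 h) = Mc (karyTree 2 h) ∧
    Pb (karyTree 2 h) =
      2 ^ (t + 1) * ((8 ^ m - 1) / 7) + 2 ^ (h - 1) + (if t = 2 then 2 else 1) := by
  obtain ⟨hPb, hMc⟩ := Pb_eq_card_and_Mc_eq_card
    (PerfectBinaryTree.isPackingBroadcast_packingBroadcast hh)
    (PerfectBinaryTree.isMulticover_coverSet hh)
    ((PerfectBinaryTree.sum_packingBroadcast hh ht hmt).trans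
      (PerfectBinaryTree.card_coverSet hh ht hmt).symm)
  rw [hPb, hMc, PerfectBinaryTree.card_coverSet hh ht hmt]
  exact ⟨rfl, rfl⟩
end
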